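/- Soundness of random-splitting divide-and-conquer: let (P, N) be a specification and φ₁₁ any LTL formula. Suppose φ₁₂ separates (P ∩ L(φ₁₁), N ∩ L(φ₁₁)), φ₂₁ separates (P ∖ L(φ₁₁), N ∖ L(φ₁₁)), and φ₂₂ separates (P ∖ L(φ₁₁), N ∩ L(φ₁₁)). Then the formula (φ₁₁ ∧ φ₁₂) ∨ (φ₂₁ ∧ φ₂₂) separates (P, N). -/
import Mathlib


/-- LTL formulae over an alphabet `α`. -/
inductive LTL (α : Type) : Type where
  | atom : α → LTL α
  | neg : LTL α → LTL α
  | conj : LTL α → LTL α → LTL α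
  | disj : LTL α → LTL α → LTL α
  | next : LTL α → LTL α
  | ev : LTL α → LTL α
  | alw : LTL α → LTL α
  | untl : LTL α → LTL α → LTL α

/-- Finite-trace satisfaction `tr, i ⊨ φ`: false whenever `i ≥ |tr|`,
and for `i < |tr|` the standard clauses. A trace is a finite sequence
(list) of sets of characters. -/
def Sat {α : Type} (tr : List (Set α)) : LTL α → ℕ → Prop
  | .atom p, i => i < tr.length ∧ p ∈ tr.getD i ∅
  | .neg φ, i => i < tr.length ∧ ¬ Sat tr φ i
  | .conj φ ψ, i => Sat tr φ i ∧ Sat tr ψ i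
  | .disj φ ψ, i => i < tr.length ∧ (Sat tr φ i ∨ Sat tr ψ i)
  | .next φ, i => Sat tr φ (i + 1)
  | .ev φ, i => ∃ j, i ≤ j ∧ j < tr.length ∧ Sat tr φ j
  | .alw φ, i => i < tr.length ∧ ∀ j, i ≤ j → j < tr.length → Sat tr φ j
  | .untl φ ψ, i =>
      ∃ j, i ≤ j ∧ j < tr.length ∧ Sat tr ψ j ∧ ∀ k, i ≤ k → k < j → Sat tr φ k

/-- `φ` separates the specification `(P, N)`: all traces in `P` are accepted
and all traces in `N` are rejected. -/
def Separates {α : Type} (φ : LTL α) (P N : Set (List (Set α))) : Prop :=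
  (∀ tr ∈ P, Sat tr φ 0) ∧ (∀ tr ∈ N, ¬ Sat tr φ 0)

/-- Uniform cost of an LTL formula: every connective and atomic proposition
costs 1. -/
def cost {α : Type} : LTL α → ℕ
  | .atom _ => 1
  | .neg φ => 1 + cost φ
  | .next φ => 1 + cost φ
  | .ev φ => 1 + cost φ
  | .alw φ => 1 + cost φ
  | .conj φ ψ => 1 + cost φ + cost ψ
  | .disj φ ψ => 1 + cost φ + cost ψ
  | .untl φ ψ => 1 + cost φ + cost ψ

/-- The language of `φ`: the set of traces satisfying `φ` at position 0. -/
def Lang {α : Type} (φ : LTL α) : Set (List (Set α)) := {tr | Sat tr φ 0}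


lemma Sat_lt {α : Type} (tr : List (Set α)) (φ : LTL α) (i : ℕ) (h : Sat tr φ i) :
    i < tr.length := by
  induction φ generalizing i with
  | atom p => exact h.1
  | neg φ ih => exact h.1
  | conj φ ψ ih1 ih2 => exact ih1 _ h.1
  | disj φ ψ ih1 ih2 => exact h.1
  | next φ ih => exact Nat.lt_of_succ_lt (ih _ h)
  | ev φ ih => obtain ⟨j, hj, hl, _⟩ := h; omega
  | alw φ ih => exact h.1
  | untl φ ψ ih1 ih2 => obtain ⟨j, hj, hl, _⟩ := h; omega

/-- Soundness of random-splitting divide-and-conquer: if `φ₁₂` separates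
`(P ∩ L(φ₁₁), N ∩ L(φ₁₁))`, `φ₂₁` separates `(P \ L(φ₁₁), N \ L(φ₁₁))`, and
`φ₂₂` separates `(P \ L(φ₁₁), N ∩ L(φ₁₁))`, then
`(φ₁₁ ∧ φ₁₂) ∨ (φ₂₁ ∧ φ₂₂)` separates `(P, N)`. -/
theorem stmt_19 {α : Type} [Fintype α] [Nonempty α]
    (P N : Set (List (Set α)))
    (hPfin : P.Finite) (hNfin : N.Finite)
    (hdisj : P ∩ N = ∅)
    (φ₁₁ φ₁₂ φ₂₁ φ₂₂ : LTL α)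
    (h12 : Separates φ₁₂ (P ∩ Lang φ₁₁) (N ∩ Lang φ₁₁))
    (h21 : Separates φ₂₁ (P \ Lang φ₁₁) (N \ Lang φ₁₁))
    (h22 : Separates φ₂₂ (P \ Lang φ₁₁) (N ∩ Lang φ₁₁)) :
    Separates (LTL.disj (LTL.conj φ₁₁ φ₁₂) (LTL.conj φ₂₁ φ₂₂)) P N := by
  constructor
  · intro tr htr
    by_cases h : tr ∈ Lang φ₁₁
    · have h1 : Sat tr φ₁₁ 0 := h
      have h2 : Sat tr φ₁₂ 0 := h12.1 tr ⟨htr, h⟩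
      exact ⟨Sat_lt tr φ₁₁ 0 h1, Or.inl ⟨h1, h2⟩⟩
    · have h1 : Sat tr φ₂₁ 0 := h21.1 tr ⟨htr, h⟩
      have h2 : Sat tr φ₂₂ 0 := h22.1 tr ⟨htr, h⟩
      exact ⟨Sat_lt tr φ₂₁ 0 h1, Or.inr ⟨h1, h2⟩⟩
  · intro tr htr hs
    obtain ⟨_, h | h⟩ := hs
    · exact h12.2 tr ⟨htr, h.1⟩ h.2
    · by_cases hL : tr ∈ Lang φ₁₁
      · exact h22.2 tr ⟨htr, hL⟩ h.2
      · exact h21.2 tr ⟨htr, hL⟩ h.1
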